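/- arXiv:2201.05637 — 2 statements merged into one kernel-verified Lean document; each statement's English description precedes it below -/
import Mathlib

section
/- Let G be a finite group and N ◁ G. Then G⁻ ⊆ N if and only if every element of G \ N has prime power order and every nontrivial element of G/N has prime order. -/
/-- A subgroup is maximal cyclic if it is cyclic and not properly contained
in any cyclic subgroup. -/
def IsMaximalCyclic {G : Type*} [Group G] (C : Subgroup G) : Prop :=
  IsCyclic C ∧ ∀ D : Subgroup G, IsCyclic D → C ≤ D → C = D

/-- η(G): the number of conjugacy classes of maximal cyclic subgroups of `G`. -/
noncomputable def eta (G : Type*) [Group G] : ℕ :=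
  Nat.card (Quot (fun C D : {C : Subgroup G // IsMaximalCyclic C} =>
    ∃ g : G, D.1 = C.1.map (MulAut.conj g).toMonoidHom))

/-- The set of elements generating a non-maximal cyclic subgroup. -/
def Gminus (G : Type*) [Group G] : Set G :=
  {g : G | ¬ IsMaximalCyclic (Subgroup.zpowers g)}

/-- `C` is a maximal cyclic subgroup of `N` (all inside an ambient group). -/
def IsMaximalCyclicIn {G : Type*} [Group G] (N C : Subgroup G) : Prop :=
  C ≤ N ∧ IsCyclic C ∧ ∀ D : Subgroup G, D ≤ N → IsCyclic D → C ≤ D → C = D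

/-!
A cyclic subgroup `⟨g⟩` is maximal cyclic iff every `h` with `g ∈ ⟨h⟩` lies in `⟨g⟩`. If a prime `p`
divides the order of `g`, then `⟨g ^ p⟩` is a proper subgroup of `⟨g⟩`, so `g ^ p ∈ G⁻`.

If `G⁻ ⊆ N` and `g ∉ N`, then `g ^ p ∈ N` for every prime `p` dividing the order of `g`; two distinct
such primes would give `g ∈ N` by Bézout. For `x = gN ≠ 1` and `p` the least prime factor of the order
of `x`, likewise `x ^ p = 1`, so `x` has order `p`.

Conversely, let `g ∉ N` and `g = h ^ m`. Then `h ∉ N`, `h` has order `q ^ n` and `hN` has order `q`;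
since `gN ≠ 1`, `q ∤ m`, so `m` is coprime to the order of `h` and `h` is a power of `g`.
-/

open Subgroup

lemma Subgroup.exists_eq_zpowers_of_isCyclic {G : Type*} [Group G] {D : Subgroup G}
    (hD : IsCyclic D) : ∃ h : G, D = zpowers h := by
  obtain ⟨h, hh⟩ := isCyclic_iff_exists_zpowers_eq_top.mp hD
  refine ⟨h, ?_⟩
  rw [← D.coe_subtype, ← MonoidHom.map_zpowers, hh, ← MonoidHom.range_eq_map, range_subtype]

lemma isMaximalCyclic_zpowers_iff {G : Type*} [Group G] {g : G} :
    IsMaximalCyclic (zpowers g) ↔ ∀ h : G, g ∈ zpowers h → h ∈ zpowers g := by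
  refine ⟨fun hg h hgh => ?_, fun hg => ⟨inferInstance, fun D hD hgD => ?_⟩⟩
  · rw [hg.2 _ inferInstance (zpowers_le.mpr hgh)]
    exact mem_zpowers h
  · obtain ⟨h, rfl⟩ := D.exists_eq_zpowers_of_isCyclic hD
    exact le_antisymm hgD (zpowers_le.mpr (hg h (zpowers_le.mp hgD)))

lemma notMem_zpowers_pow_of_prime_dvd_orderOf {G : Type*} [Group G] {g : G} {p : ℕ}
    (hp : p.Prime) (hpg : p ∣ orderOf g) : g ∉ zpowers (g ^ p) := by
  intro hmem
  obtain ⟨k, hk⟩ := mem_zpowers_iff.mp hmem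
  have hpk : g ^ ((p : ℤ) * k - 1) = 1 := by
    rw [zpow_sub_one, zpow_mul, zpow_natCast, hk, mul_inv_cancel]
  have hdvd : (p : ℤ) ∣ p * k - 1 :=
    (Int.natCast_dvd_natCast.mpr hpg).trans (orderOf_dvd_iff_zpow_eq_one.mpr hpk)
  have hp_dvd_one : (p : ℤ) ∣ 1 := by simpa using (dvd_sub_right (dvd_mul_right (p : ℤ) k)).mp hdvd
  exact hp.one_lt.ne' (by exact_mod_cast Int.eq_one_of_dvd_one (by positivity) hp_dvd_one)

lemma pow_mem_Gminus_of_prime_dvd_orderOf {G : Type*} [Group G] {g : G} {p : ℕ}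
    (hp : p.Prime) (hpg : p ∣ orderOf g) : g ^ p ∈ Gminus G := fun hmax =>
  notMem_zpowers_pow_of_prime_dvd_orderOf hp hpg <|
    isMaximalCyclic_zpowers_iff.mp hmax g (pow_mem (mem_zpowers g) p)

lemma Subgroup.mem_of_pow_mem_of_coprime {G : Type*} [Group G] (H : Subgroup G) {g : G}
    {m n : ℕ} (hmn : m.Coprime n) (hm : g ^ m ∈ H) (hn : g ^ n ∈ H) : g ∈ H := by
  obtain ⟨u, v, huv⟩ := Nat.isCoprime_iff_coprime.mpr hmn
  have hg : g = (g ^ m) ^ u * (g ^ n) ^ v := by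
    rw [← zpow_natCast, ← zpow_natCast, ← zpow_mul, ← zpow_mul, ← zpow_add, mul_comm (m : ℤ),
      mul_comm (n : ℤ), huv, zpow_one]
  rw [hg]
  exact H.mul_mem (H.zpow_mem hm u) (H.zpow_mem hn v)

lemma exists_orderOf_eq_prime_pow_of_pow_mem {G : Type*} [Group G] {H : Subgroup G} {g : G}
    (hfin : IsOfFinOrder g) (hg : g ∉ H) (hpow : ∀ p : ℕ, p.Prime → p ∣ orderOf g → g ^ p ∈ H) :
    ∃ q n : ℕ, q.Prime ∧ orderOf g = q ^ n := by
  by_cases hone : orderOf g = 1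
  · exact ⟨2, 0, Nat.prime_two, hone⟩
  set q := (orderOf g).minFac
  have hq : q.Prime := Nat.minFac_prime hone
  refine ⟨q, _, hq, Nat.eq_prime_pow_of_unique_prime_dvd hfin.orderOf_pos.ne' fun {p} hp hpg => ?_⟩
  by_contra hpq
  exact hg (H.mem_of_pow_mem_of_coprime ((Nat.coprime_primes hp hq).mpr hpq)
    (hpow p hp hpg) (hpow q hq (Nat.minFac_dvd _)))

lemma orderOf_prime_of_Gminus_subset {G : Type*} [Group G] {N : Subgroup G} [N.Normal]
    (hN : Gminus G ⊆ N) {x : G ⧸ N} (hx : x ≠ 1) : (orderOf x).Prime := by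
  obtain ⟨g, rfl⟩ := QuotientGroup.mk_surjective x
  have hone : orderOf (g : G ⧸ N) ≠ 1 := by rwa [Ne, orderOf_eq_one_iff]
  set p := (orderOf (g : G ⧸ N)).minFac
  have hp : p.Prime := Nat.minFac_prime hone
  have hpg : p ∣ orderOf g :=
    (Nat.minFac_dvd _).trans (orderOf_map_dvd (QuotientGroup.mk' N) g)
  have hgp : (g : G ⧸ N) ^ p = 1 := by
    rw [← QuotientGroup.mk_pow, QuotientGroup.eq_one_iff]
    exact hN (pow_mem_Gminus_of_prime_dvd_orderOf hp hpg)
  exact ((hp.eq_one_or_self_of_dvd _ (orderOf_dvd_of_pow_eq_one hgp)).resolve_left hone) ▸ hp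

lemma isMaximalCyclic_zpowers_of_notMem {G : Type*} [Group G] [Finite G] {N : Subgroup G}
    [N.Normal] (hpow : ∀ g : G, g ∉ N → ∃ q n : ℕ, q.Prime ∧ orderOf g = q ^ n)
    (hquot : ∀ x : G ⧸ N, x ≠ 1 → (orderOf x).Prime) {g : G} (hg : g ∉ N) :
    IsMaximalCyclic (zpowers g) := by
  refine isMaximalCyclic_zpowers_iff.mpr fun h hgh => ?_
  obtain ⟨m, rfl⟩ : ∃ m : ℕ, h ^ m = g := mem_powers_iff_mem_zpowers.mpr hgh
  have hh : h ∉ N := fun hh => hg (N.pow_mem hh m)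
  obtain ⟨q, n, hq, hord⟩ := hpow h hh
  have hqh : orderOf (h : G ⧸ N) = q := by
    have hprime := hquot _ (by rwa [Ne, QuotientGroup.eq_one_iff])
    exact (Nat.prime_dvd_prime_iff_eq hprime hq).mp
      (hprime.dvd_of_dvd_pow (hord ▸ orderOf_map_dvd (QuotientGroup.mk' N) h))
  have hqm : ¬ q ∣ m := by
    rintro ⟨c, rfl⟩
    apply hg
    rw [← QuotientGroup.eq_one_iff, QuotientGroup.mk_pow, pow_mul, ← hqh, pow_orderOf_eq_one,
      one_pow]
  have hcop : m.Coprime (orderOf h) :=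
    hord ▸ Nat.Coprime.pow_right n ((hq.coprime_iff_not_dvd.mpr hqm).symm)
  obtain ⟨k, hk⟩ := exists_pow_eq_self_of_coprime hcop
  have hmem : (h ^ m) ^ k ∈ zpowers (h ^ m) := pow_mem (mem_zpowers _) k
  rwa [hk] at hmem

theorem stmt_13 {G : Type*} [Group G] [Finite G] (N : Subgroup G) [N.Normal] :
    Gminus G ⊆ (N : Set G) ↔
      ((∀ g : G, g ∉ N → ∃ q n : ℕ, q.Prime ∧ orderOf g = q ^ n) ∧
        ∀ x : G ⧸ N, x ≠ 1 → (orderOf x).Prime) := by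
  refine ⟨fun hN => ⟨fun g hg => ?_, fun x => orderOf_prime_of_Gminus_subset hN⟩,
    fun ⟨hpow, hquot⟩ g hg => ?_⟩
  · exact exists_orderOf_eq_prime_pow_of_pow_mem (isOfFinOrder_of_finite g) hg
      fun p hp hpg => hN (pow_mem_Gminus_of_prime_dvd_orderOf hp hpg)
  · by_contra hgN
    exact hg (isMaximalCyclic_zpowers_of_notMem hpow hquot hgN)
end

section
/- If N is a proper normal subgroup of a finite group G, then η(G/N) ≤ η(G). -/
/-!
Under a surjection `f : G →* H` every maximal cyclic subgroup `C` of `H` is the image of a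
maximal cyclic subgroup of `G`: lift a generator of `C` and enlarge its cyclic span to a maximal
cyclic subgroup `D` of `G`; then `f(D)` is cyclic and contains `C`, hence equals `C`.
Since `f` intertwines conjugation, `D ↦ [f(D)]` (a fixed class when `f(D)` is not maximal
cyclic) is a well-defined surjection on conjugacy classes.
-/

open Subgroup

section MaximalCyclic

variable {G H : Type*} [Group G] [Group H]

theorem isMaximalCyclic_iff_maximal {C : Subgroup G} :
    IsMaximalCyclic C ↔ Maximal (fun D : Subgroup G => IsCyclic D) C :=
  ⟨fun h => ⟨h.1, fun _ hD hCD => (h.2 _ hD hCD).ge⟩,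
    fun h => ⟨h.1, fun _ hD hCD => le_antisymm hCD (h.2 hD hCD)⟩⟩

theorem exists_isMaximalCyclic_mem [Finite G] (g : G) :
    ∃ D : Subgroup G, IsMaximalCyclic D ∧ g ∈ D := by
  obtain ⟨D, hgD, hD⟩ :=
    Finite.exists_le_maximal (p := fun D : Subgroup G => IsCyclic D) (isCyclic_zpowers g)
  exact ⟨D, isMaximalCyclic_iff_maximal.mpr hD, zpowers_le.mp hgD⟩

theorem IsCyclic.subgroup_map (f : G →* H) {C : Subgroup G} (hC : IsCyclic C) :
    IsCyclic (C.map f) :=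
  isCyclic_of_surjective (f.subgroupMap C) (f.subgroupMap_surjective C)

theorem map_symm_map_mulEquiv (e : G ≃* H) (C : Subgroup G) :
    (C.map e.toMonoidHom).map e.symm.toMonoidHom = C := by
  rw [map_map]
  simp

theorem IsMaximalCyclic.map_mulEquiv (e : G ≃* H) {C : Subgroup G} (hC : IsMaximalCyclic C) :
    IsMaximalCyclic (C.map e.toMonoidHom) := by
  refine ⟨hC.1.subgroup_map _, fun D hD hCD => ?_⟩
  have hC_le : C ≤ D.map e.symm.toMonoidHom := by
    simpa only [map_symm_map_mulEquiv] using map_mono (f := e.symm.toMonoidHom) hCD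
  rw [hC.2 _ (hD.subgroup_map _) hC_le]
  exact map_symm_map_mulEquiv e.symm D

theorem isMaximalCyclic_map_mulEquiv_iff (e : G ≃* H) {C : Subgroup G} :
    IsMaximalCyclic (C.map e.toMonoidHom) ↔ IsMaximalCyclic C := by
  refine ⟨fun h => ?_, fun h => h.map_mulEquiv e⟩
  simpa only [map_symm_map_mulEquiv] using h.map_mulEquiv e.symm

theorem map_map_conj (f : G →* H) (g : G) (C : Subgroup G) :
    (C.map (MulAut.conj g).toMonoidHom).map f
      = (C.map f).map (MulAut.conj (f g)).toMonoidHom := by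
  rw [map_map, map_map]
  congr 1
  ext x
  simp

theorem IsMaximalCyclic.exists_isMaximalCyclic_map_eq [Finite G] {f : G →* H}
    (hf : Function.Surjective f) {C : Subgroup H} (hC : IsMaximalCyclic C) :
    ∃ D : Subgroup G, IsMaximalCyclic D ∧ D.map f = C := by
  obtain ⟨x, rfl⟩ := C.isCyclic_iff_exists_zpowers_eq_top.mp hC.1
  obtain ⟨g, rfl⟩ := hf x
  obtain ⟨D, hD, hgD⟩ := exists_isMaximalCyclic_mem g
  have hle : zpowers (f g) ≤ D.map f := zpowers_le.mpr (mem_map_of_mem f hgD)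
  exact ⟨D, hD, (hC.2 _ (hD.1.subgroup_map f) hle).symm⟩

end MaximalCyclic

section Classes

variable {G H : Type*} [Group G] [Group H]

/-- The type counted by `eta G`. -/
abbrev MaximalCyclicClasses (G : Type*) [Group G] : Type _ :=
  Quot (fun C D : {C : Subgroup G // IsMaximalCyclic C} =>
    ∃ g : G, D.1 = C.1.map (MulAut.conj g).toMonoidHom)

open Classical in
noncomputable def classOfMap (f : G →* H) (c₀ : MaximalCyclicClasses H)
    (C : {C : Subgroup G // IsMaximalCyclic C}) : MaximalCyclicClasses H :=
  if h : IsMaximalCyclic (C.1.map f) then Quot.mk _ ⟨_, h⟩ else c₀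

theorem classOfMap_eq_of_conj (f : G →* H) (c₀ : MaximalCyclicClasses H)
    (C D : {C : Subgroup G // IsMaximalCyclic C})
    (hCD : ∃ g : G, D.1 = C.1.map (MulAut.conj g).toMonoidHom) :
    classOfMap f c₀ C = classOfMap f c₀ D := by
  obtain ⟨g, hg⟩ := hCD
  have hmap : D.1.map f = (C.1.map f).map (MulAut.conj (f g)).toMonoidHom := by
    rw [hg, map_map_conj]
  have hiff : IsMaximalCyclic (D.1.map f) ↔ IsMaximalCyclic (C.1.map f) := by
    rw [hmap, isMaximalCyclic_map_mulEquiv_iff]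
  unfold classOfMap
  by_cases h : IsMaximalCyclic (C.1.map f)
  · rw [dif_pos h, dif_pos (hiff.mpr h)]
    exact Quot.sound ⟨f g, hmap⟩
  · rw [dif_neg h, dif_neg (mt hiff.mp h)]

theorem classOfMap_surjective [Finite G] {f : G →* H} (hf : Function.Surjective f)
    (c₀ : MaximalCyclicClasses H) : Function.Surjective (classOfMap f c₀) := by
  rintro ⟨C, hC⟩
  obtain ⟨D, hD, hDC⟩ := hC.exists_isMaximalCyclic_map_eq hf
  refine ⟨⟨D, hD⟩, ?_⟩
  subst hDC
  exact dif_pos hC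

theorem eta_le_of_surjective [Finite G] {f : G →* H} (hf : Function.Surjective f) :
    eta H ≤ eta G := by
  have : Finite H := Finite.of_surjective f hf
  obtain ⟨C₀, hC₀, -⟩ := exists_isMaximalCyclic_mem (1 : H)
  let c₀ : MaximalCyclicClasses H := Quot.mk _ ⟨C₀, hC₀⟩
  exact Nat.card_le_card_of_surjective (Quot.lift _ (classOfMap_eq_of_conj f c₀))
    ((Quot.surjective_lift _).mpr (classOfMap_surjective hf c₀))

end Classes

theorem stmt_18_general {G : Type*} [Group G] [Finite G] (N : Subgroup G) [N.Normal] :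
    eta (G ⧸ N) ≤ eta G :=
  eta_le_of_surjective (QuotientGroup.mk'_surjective N)

theorem stmt_18 {G : Type*} [Group G] [Finite G] (N : Subgroup G) [N.Normal]
    (hN : N ≠ ⊤) : eta (G ⧸ N) ≤ eta G :=
  stmt_18_general N
end
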